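/- Under cluster randomization (uniformly random treated subset of size m, 0 < m < J), monotonicity, the exclusion restriction, and n_CO,j ≥ 1 for every cluster j, the effect-ratio estimator identifies the overall CACE exactly in finite samples: E[ (1/m)Σ_j Z_j Y_j − (1/(J−m))Σ_j (1−Z_j) Y_j ] / E[ (1/m)Σ_j Z_j D_j − (1/(J−m))Σ_j (1−Z_j) D_j ] = τ, and the denominator expectation equals (1/J)Σ_j n_CO,j > 0. -/

import Mathlib

open Finset

/-- Average of `f` over all size-`m` treated subsets of the `J` clusters
(uniform cluster randomization). -/
noncomputable def clExpect (J m : ℕ) (f : Finset (Fin J) → ℝ) : ℝ :=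
  (∑ s ∈ (univ : Finset (Finset (Fin J))).filter (fun s => s.card = m), f s) / (J.choose m)

/-! Each cluster lies in exactly `C(J-1, m-1)` of the `C(J, m)` treated sets, so the treated mean of
any cluster-level quantity is unbiased for its average over all clusters; passing to complements,
the same holds for the control mean. Because the observed total of a treated cluster is its
`Z = 1` potential total and that of a control cluster its `Z = 0` potential total, both expected
differences in means are averages of per-cluster contrasts. Under monotonicity only compliers
contribute to a contrast, so the denominator is `(1/J) Σ_j n_CO,j`, the numerator is `1/J` times
the total complier effect, and the factor `1/J` cancels in the ratio. -/

section Powerset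

variable {α M : Type*} [Fintype α] [DecidableEq α] [AddCommMonoid M]

lemma sum_powersetCard_sum {m : ℕ} (hm : 0 < m) (f : α → M) :
    ∑ s ∈ univ.powersetCard m, ∑ j ∈ s, f j
      = (Fintype.card α - 1).choose (m - 1) • ∑ j, f j := by
  have hcount (j : α) :
      #((univ.powersetCard m).filter (j ∈ ·)) = (Fintype.card α - 1).choose (m - 1) := by
    simpa using card_filter_powersetCard_subset {j} univ m (subset_univ _) hm
  calc ∑ s ∈ univ.powersetCard m, ∑ j ∈ s, f j
      = ∑ j, ∑ s ∈ univ.powersetCard m, if j ∈ s then f j else 0 := by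
        rw [sum_comm]
        refine sum_congr rfl fun s _ => ?_
        rw [← sum_filter, filter_mem_eq_inter, univ_inter]
    _ = (Fintype.card α - 1).choose (m - 1) • ∑ j, f j := by
        rw [smul_sum]
        refine sum_congr rfl fun j _ => ?_
        rw [← sum_filter, sum_const, hcount]

lemma sum_powersetCard_compl {m : ℕ} (hm : m ≤ Fintype.card α) (g : Finset α → M) :
    ∑ s ∈ univ.powersetCard m, g sᶜ
      = ∑ t ∈ univ.powersetCard (Fintype.card α - m), g t :=
  sum_nbij' (·ᶜ) (·ᶜ)
    (fun s hs => mem_powersetCard_univ.2 (by rw [card_compl, mem_powersetCard_univ.1 hs]))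
    (fun t ht => mem_powersetCard_univ.2 (by rw [card_compl, mem_powersetCard_univ.1 ht]; omega))
    (fun _ _ => compl_compl _) (fun _ _ => compl_compl _) (fun _ _ => rfl)

end Powerset

lemma clExpect_sub (J m : ℕ) (f g : Finset (Fin J) → ℝ) :
    clExpect J m (fun s => f s - g s) = clExpect J m f - clExpect J m g := by
  simp only [clExpect, sum_sub_distrib, sub_div]

lemma clExpect_treated_mean {J m : ℕ} (hm0 : 0 < m) (hmJ : m ≤ J) (A : Fin J → ℝ) :
    clExpect J m (fun s => (∑ j ∈ s, A j) / m) = (∑ j, A j) / J := by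
  obtain ⟨k, rfl⟩ : ∃ k, m = k + 1 := ⟨m - 1, by omega⟩
  obtain ⟨n, rfl⟩ : ∃ n, J = n + 1 := ⟨J - 1, by omega⟩
  have hchoose : ((n + 1 : ℕ) : ℝ) * n.choose k = (n + 1).choose (k + 1) * (k + 1 : ℕ) := by
    exact_mod_cast Nat.add_one_mul_choose_eq n k
  have hpos : (0 : ℝ) < (n + 1).choose (k + 1) := by exact_mod_cast Nat.choose_pos hmJ
  rw [clExpect, univ_filter_card_eq, ← sum_div, sum_powersetCard_sum hm0, Fintype.card_fin,
    add_tsub_cancel_right, add_tsub_cancel_right, nsmul_eq_mul]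
  push_cast at hchoose ⊢
  field_simp
  linear_combination (∑ j, A j) * hchoose

lemma clExpect_control_mean {J m : ℕ} (hmJ : m < J) (B : Fin J → ℝ) :
    clExpect J m (fun s => (∑ j ∈ sᶜ, B j) / ((J : ℝ) - m)) = (∑ j, B j) / J := by
  have hcast : (J : ℝ) - m = ((J - m : ℕ) : ℝ) := by rw [Nat.cast_sub hmJ.le]
  have htreated := clExpect_treated_mean (Nat.sub_pos_of_lt hmJ) (Nat.sub_le J m) B
  rw [clExpect, univ_filter_card_eq, Nat.choose_symm hmJ.le] at htreated
  rw [← htreated, clExpect, univ_filter_card_eq, hcast,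
    sum_powersetCard_compl (by simpa using hmJ.le)
      fun t => (∑ j ∈ t, B j) / ((J - m : ℕ) : ℝ), Fintype.card_fin]

lemma clExpect_diff_in_means {J m : ℕ} (hm0 : 0 < m) (hmJ : m < J)
    (T : Finset (Fin J) → Fin J → ℝ) (A B : Fin J → ℝ)
    (hT : ∀ s j, T s j = if j ∈ s then A j else B j) :
    clExpect J m (fun s => (∑ j ∈ s, T s j) / m - (∑ j ∈ sᶜ, T s j) / ((J : ℝ) - m))
      = 1 / J * ∑ j, (A j - B j) := by
  have hobserved (s : Finset (Fin J)) :
      (∑ j ∈ s, T s j) / m - (∑ j ∈ sᶜ, T s j) / ((J : ℝ) - m)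
        = (∑ j ∈ s, A j) / m - (∑ j ∈ sᶜ, B j) / ((J : ℝ) - m) := by
    rw [sum_congr rfl fun j hj => (hT s j).trans (if_pos hj),
      sum_congr rfl fun j hj => (hT s j).trans (if_neg (mem_compl.1 hj))]
  rw [funext hobserved, clExpect_sub, clExpect_treated_mean hm0 hmJ.le, clExpect_control_mean hmJ,
    sum_sub_distrib]
  ring

section Compliers

variable {ι G : Type*} [Fintype ι] [AddCommGroup G]

lemma sub_eq_ite_complier {d1 d0 : Bool} (hmono : d0 = true → d1 = true) (y : Bool → G) :
    y d1 - y d0 = if d1 = true ∧ d0 = false then y true - y false else 0 := by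
  cases d1 <;> cases d0 <;> simp_all

lemma sum_sub_sum_eq_sum_compliers {d1 d0 : ι → Bool}
    (hmono : ∀ i, d0 i = true → d1 i = true) (y : ι → Bool → G) :
    ∑ i, y i (d1 i) - ∑ i, y i (d0 i)
      = ∑ i ∈ univ.filter (fun i => d1 i = true ∧ d0 i = false), (y i true - y i false) := by
  rw [← sum_sub_distrib, sum_filter]
  exact sum_congr rfl fun i _ => sub_eq_ite_complier (hmono i) (y i)

end Compliers

theorem stmt12_general
    (J m : ℕ) (hm0 : 0 < m) (hmJ : m < J)
    (n : Fin J → ℕ)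
    -- potential compliances and potential outcomes (exclusion restriction:
    -- outcomes depend only on the treatment received)
    (D1 D0 : (j : Fin J) → Fin (n j) → Bool)
    (Y : (j : Fin J) → Fin (n j) → Bool → ℝ)
    -- monotonicity: no defiers
    (mono : ∀ j i, D0 j i = true → D1 j i = true)
    (nCO : Fin J → ℕ)
    (hnCO : ∀ j, nCO j =
      (univ.filter (fun i => D1 j i = true ∧ D0 j i = false)).card)
    (hnCO1 : ∀ j, 1 ≤ nCO j)
    -- overall complier average causal effect
    (τ : ℝ)
    (hτ : τ = (∑ j, ∑ i ∈ univ.filter (fun i => D1 j i = true ∧ D0 j i = false),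
        (Y j i true - Y j i false)) / (∑ j, (nCO j : ℝ)))
    -- observed cluster totals under assignment s
    (Yt Dt : Finset (Fin J) → Fin J → ℝ)
    (hYt : ∀ s j, Yt s j = ∑ i, Y j i (if j ∈ s then D1 j i else D0 j i))
    (hDt : ∀ s j, Dt s j =
      ∑ i, (if (if j ∈ s then D1 j i else D0 j i) then (1 : ℝ) else 0))
    (num den : Finset (Fin J) → ℝ)
    (hnum : ∀ s, num s = (∑ j ∈ s, Yt s j) / m - (∑ j ∈ sᶜ, Yt s j) / ((J : ℝ) - m))
    (hden : ∀ s, den s = (∑ j ∈ s, Dt s j) / m - (∑ j ∈ sᶜ, Dt s j) / ((J : ℝ) - m)) :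
    clExpect J m den = (1 / (J : ℝ)) * ∑ j, (nCO j : ℝ) ∧
    0 < clExpect J m den ∧
    clExpect J m num / clExpect J m den = τ := by
  have hden_eq : clExpect J m den = 1 / J * ∑ j, (nCO j : ℝ) := by
    rw [funext hden, clExpect_diff_in_means hm0 hmJ Dt
      (fun j => ∑ i, if D1 j i then (1 : ℝ) else 0)
      (fun j => ∑ i, if D0 j i then (1 : ℝ) else 0)
      fun s j => by rw [hDt]; split_ifs <;> rfl]
    congr 1
    refine sum_congr rfl fun j _ => ?_
    exact (sum_sub_sum_eq_sum_compliers (mono j) fun _ b => if b then (1 : ℝ) else 0).trans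
      (by simp [hnCO])
  have hnum_eq : clExpect J m num = 1 / J * ∑ j, ∑ i ∈ univ.filter
      (fun i => D1 j i = true ∧ D0 j i = false), (Y j i true - Y j i false) := by
    rw [funext hnum, clExpect_diff_in_means hm0 hmJ Yt (fun j => ∑ i, Y j i (D1 j i))
      (fun j => ∑ i, Y j i (D0 j i)) fun s j => by rw [hYt]; split_ifs <;> rfl]
    congr 1
    exact sum_congr rfl fun j _ => sum_sub_sum_eq_sum_compliers (mono j) (Y j)
  have hJ : (0 : ℝ) < J := by exact_mod_cast hm0.trans hmJ
  have hcompliers : 0 < ∑ j, (nCO j : ℝ) := by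
    have : Nonempty (Fin J) := ⟨⟨0, hm0.trans hmJ⟩⟩
    exact sum_pos (fun j _ => by exact_mod_cast hnCO1 j) univ_nonempty
  refine ⟨hden_eq, by rw [hden_eq]; positivity, ?_⟩
  rw [hnum_eq, hden_eq, hτ, mul_div_mul_left _ _ (by positivity)]

/-- Under cluster randomization, monotonicity, the exclusion restriction, and at least one
complier per cluster, the effect-ratio estimator identifies the overall CACE exactly in
finite samples, and the denominator expectation equals `(1/J) Σ_j n_CO,j > 0`. -/
theorem stmt12
    (J m : ℕ) (hm0 : 0 < m) (hmJ : m < J)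
    (n : Fin J → ℕ) (hn : ∀ j, 1 ≤ n j)
    -- potential compliances and potential outcomes (exclusion restriction:
    -- outcomes depend only on the treatment received)
    (D1 D0 : (j : Fin J) → Fin (n j) → Bool)
    (Y : (j : Fin J) → Fin (n j) → Bool → ℝ)
    -- monotonicity: no defiers
    (mono : ∀ j i, D0 j i = true → D1 j i = true)
    (nCO : Fin J → ℕ)
    (hnCO : ∀ j, nCO j =
      (univ.filter (fun i => D1 j i = true ∧ D0 j i = false)).card)
    (hnCO1 : ∀ j, 1 ≤ nCO j)
    -- overall complier average causal effect
    (τ : ℝ)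
    (hτ : τ = (∑ j, ∑ i ∈ univ.filter (fun i => D1 j i = true ∧ D0 j i = false),
        (Y j i true - Y j i false)) / (∑ j, (nCO j : ℝ)))
    -- observed cluster totals under assignment s
    (Yt Dt : Finset (Fin J) → Fin J → ℝ)
    (hYt : ∀ s j, Yt s j = ∑ i, Y j i (if j ∈ s then D1 j i else D0 j i))
    (hDt : ∀ s j, Dt s j =
      ∑ i, (if (if j ∈ s then D1 j i else D0 j i) then (1 : ℝ) else 0))
    (num den : Finset (Fin J) → ℝ)
    (hnum : ∀ s, num s = (∑ j ∈ s, Yt s j) / m - (∑ j ∈ sᶜ, Yt s j) / ((J : ℝ) - m))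
    (hden : ∀ s, den s = (∑ j ∈ s, Dt s j) / m - (∑ j ∈ sᶜ, Dt s j) / ((J : ℝ) - m)) :
    clExpect J m den = (1 / (J : ℝ)) * ∑ j, (nCO j : ℝ) ∧
    0 < clExpect J m den ∧
    clExpect J m num / clExpect J m den = τ :=
  stmt12_general J m hm0 hmJ n D1 D0 Y mono nCO hnCO hnCO1 τ hτ Yt Dt hYt hDt num den hnum hden
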